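/- Let S be the set of continuous functions φ : ℝ → ℝ^p with sup-norm at most K := √2·N·M/γ. Define the operator Ω by (Ωφ)₊(t) = -∫_t^∞ e^{A₊(t-s)} F₊(s, φ(s)) ds and (Ωφ)₋(t) = ∫_{-∞}^t e^{A₋(t-s)} F₋(s, φ(s)) ds, where ‖F(s,x)‖ ≤ M for all s, x. Then Ω maps S into S. -/

import Mathlib

/-! For `t ≤ s` the integrand of the forward integral is bounded by `N M e^{γ (t - s)}`, whose
integral over `s > t` is `N M / γ`; combining the two components gives `√2 N M / γ`.
For continuity, `e^{(t - s) A} = e^{t A} e^{-s A}` turns the forward integral into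
`e^{t A} (C - ∫₀ᵗ e^{-s A} f s ds)`, continuous in `t`. The backward integral is the forward one
for `-A` and `s ↦ f (-s)`, evaluated at `-t`. -/

open MeasureTheory Set NormedSpace

theorem integrableOn_exp_mul_sub_Ioi {γ : ℝ} (hγ : 0 < γ) (t : ℝ) :
    IntegrableOn (fun s => Real.exp (γ * (t - s))) (Ioi t) := by
  have h : IntegrableOn _ (Ioi t) :=
    (integrableOn_exp_mul_Ioi (neg_neg_of_pos hγ) t).const_mul (Real.exp (γ * t))
  simpa [mul_sub, Real.exp_sub, div_eq_mul_inv, ← Real.exp_neg] using h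

theorem integral_exp_mul_sub_Ioi {γ : ℝ} (hγ : 0 < γ) (t : ℝ) :
    ∫ s in Ioi t, Real.exp (γ * (t - s)) = γ⁻¹ := by
  simp_rw [mul_sub, Real.exp_sub, div_eq_mul_inv, ← Real.exp_neg, ← neg_mul]
  rw [integral_const_mul, integral_exp_mul_Ioi (neg_neg_of_pos hγ), neg_mul, Real.exp_neg]
  field_simp

section VariationOfConstants

variable {E : Type*} [NormedAddCommGroup E] [NormedSpace ℝ E]
  (A : E →L[ℝ] E) {N γ M : ℝ} {f : ℝ → E}

theorem integral_Iic_exp_smul_apply_eq (t : ℝ) :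
    ∫ s in Iic t, exp ((t - s) • A) (f s) = ∫ s in Ici (-t), exp ((-t - s) • -A) (f (-s)) := by
  rw [integral_Ici_eq_integral_Ioi, ← neg_neg t, ← integral_comp_neg_Ioi, neg_neg]
  congr 1 with s
  rw [smul_neg, ← neg_smul]
  ring_nf

theorem norm_exp_smul_neg_le
    (hexp : ∀ τ : ℝ, 0 ≤ τ → ‖exp (τ • A)‖ ≤ N * Real.exp (-γ * τ)) (τ : ℝ) (hτ : τ ≤ 0) :
    ‖exp (τ • -A)‖ ≤ N * Real.exp (γ * τ) := by
  simpa [smul_neg, ← neg_smul] using hexp (-τ) (neg_nonneg.2 hτ)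

theorem norm_exp_smul_apply_le (hexp : ∀ τ : ℝ, τ ≤ 0 → ‖exp (τ • A)‖ ≤ N * Real.exp (γ * τ))
    (hfM : ∀ s, ‖f s‖ ≤ M) {t s : ℝ} (hts : t ≤ s) :
    ‖exp ((t - s) • A) (f s)‖ ≤ N * M * Real.exp (γ * (t - s)) := by
  have hτ : t - s ≤ 0 := sub_nonpos.2 hts
  calc ‖exp ((t - s) • A) (f s)‖ ≤ ‖exp ((t - s) • A)‖ * ‖f s‖ :=
        ContinuousLinearMap.le_opNorm _ _
    _ ≤ N * Real.exp (γ * (t - s)) * M :=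
        mul_le_mul (hexp _ hτ) (hfM s) (norm_nonneg _) ((norm_nonneg _).trans (hexp _ hτ))
    _ = N * M * Real.exp (γ * (t - s)) := by ring

theorem norm_integral_Ici_exp_smul_apply_le (hγ : 0 < γ)
    (hexp : ∀ τ : ℝ, τ ≤ 0 → ‖exp (τ • A)‖ ≤ N * Real.exp (γ * τ))
    (hfM : ∀ s, ‖f s‖ ≤ M) (t : ℝ) :
    ‖∫ s in Ici t, exp ((t - s) • A) (f s)‖ ≤ N * M / γ := by
  rw [integral_Ici_eq_integral_Ioi]
  calc ‖∫ s in Ioi t, exp ((t - s) • A) (f s)‖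
      ≤ ∫ s in Ioi t, N * M * Real.exp (γ * (t - s)) :=
        norm_integral_le_of_norm_le ((integrableOn_exp_mul_sub_Ioi hγ t).const_mul (N * M))
          (ae_restrict_of_forall_mem measurableSet_Ioi fun _ hs =>
            norm_exp_smul_apply_le A hexp hfM (le_of_lt hs))
    _ = N * M / γ := by rw [integral_const_mul, integral_exp_mul_sub_Ioi hγ, div_eq_mul_inv]

theorem norm_integral_Iic_exp_smul_apply_le (hγ : 0 < γ)
    (hexp : ∀ τ : ℝ, 0 ≤ τ → ‖exp (τ • A)‖ ≤ N * Real.exp (-γ * τ))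
    (hfM : ∀ s, ‖f s‖ ≤ M) (t : ℝ) :
    ‖∫ s in Iic t, exp ((t - s) • A) (f s)‖ ≤ N * M / γ := by
  rw [integral_Iic_exp_smul_apply_eq]
  exact norm_integral_Ici_exp_smul_apply_le (-A) hγ (norm_exp_smul_neg_le A hexp)
    (fun s => hfM (-s)) (-t)

variable [CompleteSpace E]

theorem continuous_exp_smul : Continuous fun t : ℝ => exp (t • A) :=
  continuous_iff_continuousAt.2 fun t => (hasDerivAt_exp_smul_const A t).continuousAt

theorem exp_add_smul (a b : ℝ) : exp ((a + b) • A) = exp (a • A) * exp (b • A) := by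
  have hradius := expSeries_radius_eq_top ℝ (E →L[ℝ] E)
  rw [add_smul]
  exact exp_add_of_commute_of_mem_ball (((Commute.refl A).smul_right b).smul_left a)
    (hradius.symm ▸ edist_lt_top _ _) (hradius.symm ▸ edist_lt_top _ _)

theorem integrableOn_Ioi_exp_smul_apply (hγ : 0 < γ)
    (hexp : ∀ τ : ℝ, τ ≤ 0 → ‖exp (τ • A)‖ ≤ N * Real.exp (γ * τ))
    (hf : Continuous f) (hfM : ∀ s, ‖f s‖ ≤ M) (t : ℝ) :
    IntegrableOn (fun s => exp ((t - s) • A) (f s)) (Ioi t) :=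
  Integrable.mono' ((integrableOn_exp_mul_sub_Ioi hγ t).const_mul (N * M))
    (((continuous_exp_smul A).comp (continuous_const.sub continuous_id)).clm_apply
      hf).aestronglyMeasurable
    (ae_restrict_of_forall_mem measurableSet_Ioi fun _ hs =>
      norm_exp_smul_apply_le A hexp hfM (le_of_lt hs))

theorem continuous_integral_Ici_exp_smul_apply (hγ : 0 < γ)
    (hexp : ∀ τ : ℝ, τ ≤ 0 → ‖exp (τ • A)‖ ≤ N * Real.exp (γ * τ))
    (hf : Continuous f) (hfM : ∀ s, ‖f s‖ ≤ M) :
    Continuous fun t => ∫ s in Ici t, exp ((t - s) • A) (f s) := by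
  set g : ℝ → E := fun s => exp ((-s) • A) (f s)
  have hg : Continuous g := ((continuous_exp_smul A).comp continuous_neg).clm_apply hf
  have hfactor : ∀ t s, exp ((t - s) • A) (f s) = exp (t • A) (g s) := by
    intro t s
    rw [sub_eq_add_neg, exp_add_smul]
    rfl
  have hg_int : ∀ t, IntegrableOn g (Ioi t) := by
    intro t
    have hcomp : IntegrableOn (fun s => exp ((-t) • A) (exp ((t - s) • A) (f s))) (Ioi t) :=
      (exp ((-t) • A)).integrable_comp (integrableOn_Ioi_exp_smul_apply A hγ hexp hf hfM t)
    refine hcomp.congr_fun (fun s _ => ?_) measurableSet_Ioi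
    dsimp only
    rw [hfactor, ← mul_apply_eq_comp, ← exp_add_smul,
      neg_add_cancel, zero_smul, exp_zero, one_apply_eq_self]
  have hrepr : ∀ t, ∫ s in Ici t, exp ((t - s) • A) (f s)
      = exp (t • A) ((∫ s in Ioi 0, g s) - ∫ s in 0..t, g s) := by
    intro t
    rw [integral_Ici_eq_integral_Ioi,
      ← intervalIntegral.integral_Ioi_sub_Ioi' (hg_int 0) (hg_int t), sub_sub_cancel,
      ← ContinuousLinearMap.integral_comp_comm _ (hg_int t)]
    simp_rw [hfactor]
  simp_rw [hrepr]
  exact (continuous_exp_smul A).clm_apply (continuous_const.sub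
    (intervalIntegral.continuous_primitive (fun a b => hg.intervalIntegrable a b) 0))

theorem continuous_integral_Iic_exp_smul_apply (hγ : 0 < γ)
    (hexp : ∀ τ : ℝ, 0 ≤ τ → ‖exp (τ • A)‖ ≤ N * Real.exp (-γ * τ))
    (hf : Continuous f) (hfM : ∀ s, ‖f s‖ ≤ M) :
    Continuous fun t => ∫ s in Iic t, exp ((t - s) • A) (f s) := by
  simp_rw [integral_Iic_exp_smul_apply_eq]
  exact (continuous_integral_Ici_exp_smul_apply (-A) hγ (norm_exp_smul_neg_le A hexp)
    (hf.comp continuous_neg) (fun s => hfM (-s))).comp continuous_neg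

end VariationOfConstants

theorem left_le_sqrt_sq_add_sq (a b : ℝ) : a ≤ √(a ^ 2 + b ^ 2) :=
  Real.le_sqrt_of_sq_le (le_add_of_nonneg_right (sq_nonneg b))

theorem right_le_sqrt_sq_add_sq (a b : ℝ) : b ≤ √(a ^ 2 + b ^ 2) :=
  Real.le_sqrt_of_sq_le (le_add_of_nonneg_left (sq_nonneg a))

theorem sqrt_sq_add_sq_le {a b c : ℝ} (ha : 0 ≤ a) (hb : 0 ≤ b) (hac : a ≤ c) (hbc : b ≤ c) :
    √(a ^ 2 + b ^ 2) ≤ √2 * c := by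
  calc √(a ^ 2 + b ^ 2) ≤ √(2 * c ^ 2) := Real.sqrt_le_sqrt (by nlinarith)
    _ = √2 * c := by rw [Real.sqrt_mul zero_le_two, Real.sqrt_sq (ha.trans hac)]

theorem stmt2_general (r q : ℕ)
    (Ap : Matrix (Fin r) (Fin r) ℝ) (Am : Matrix (Fin q) (Fin q) ℝ)
    (N γ M : ℝ) (hγ : 0 < γ)
    (hexpP : ∀ t : ℝ, t ≤ 0 →
      ‖NormedSpace.exp (t • (Matrix.toEuclideanCLM (𝕜 := ℝ) Ap))‖ ≤ N * Real.exp (γ * t))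
    (hexpM : ∀ t : ℝ, 0 ≤ t →
      ‖NormedSpace.exp (t • (Matrix.toEuclideanCLM (𝕜 := ℝ) Am))‖ ≤ N * Real.exp (-γ * t))
    (Fp : ℝ → EuclideanSpace ℝ (Fin r) × EuclideanSpace ℝ (Fin q) → EuclideanSpace ℝ (Fin r))
    (Fm : ℝ → EuclideanSpace ℝ (Fin r) × EuclideanSpace ℝ (Fin q) → EuclideanSpace ℝ (Fin q))
    (hFc : Continuous (Function.uncurry fun t x => (Fp t x, Fm t x)))
    (hFbound : ∀ t x, Real.sqrt (‖Fp t x‖ ^ 2 + ‖Fm t x‖ ^ 2) ≤ M)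
    (φp : ℝ → EuclideanSpace ℝ (Fin r)) (φm : ℝ → EuclideanSpace ℝ (Fin q))
    (hφc : Continuous φp ∧ Continuous φm)
    (Ωp : ℝ → EuclideanSpace ℝ (Fin r)) (Ωm : ℝ → EuclideanSpace ℝ (Fin q))
    (hΩp : ∀ t, Ωp t = - ∫ s in Set.Ici t,
      NormedSpace.exp ((t - s) • (Matrix.toEuclideanCLM (𝕜 := ℝ) Ap)) (Fp s (φp s, φm s)))
    (hΩm : ∀ t, Ωm t = ∫ s in Set.Iic t,
      NormedSpace.exp ((t - s) • (Matrix.toEuclideanCLM (𝕜 := ℝ) Am)) (Fm s (φp s, φm s))) :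
    (Continuous Ωp ∧ Continuous Ωm) ∧
      ∀ t, Real.sqrt (‖Ωp t‖ ^ 2 + ‖Ωm t‖ ^ 2) ≤ Real.sqrt 2 * N * M / γ := by
  have hF : Continuous fun s => (Fp s (φp s, φm s), Fm s (φp s, φm s)) :=
    hFc.comp (continuous_id.prodMk (hφc.1.prodMk hφc.2))
  have hFp : ∀ s, ‖Fp s (φp s, φm s)‖ ≤ M := fun s =>
    (left_le_sqrt_sq_add_sq _ _).trans (hFbound _ _)
  have hFm : ∀ s, ‖Fm s (φp s, φm s)‖ ≤ M := fun s =>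
    (right_le_sqrt_sq_add_sq _ _).trans (hFbound _ _)
  refine ⟨⟨?_, ?_⟩, fun t => ?_⟩
  · rw [funext hΩp]
    exact (continuous_integral_Ici_exp_smul_apply _ hγ hexpP hF.fst hFp).neg
  · rw [funext hΩm]
    exact continuous_integral_Iic_exp_smul_apply _ hγ hexpM hF.snd hFm
  · rw [mul_assoc, mul_div_assoc]
    refine sqrt_sq_add_sq_le (norm_nonneg _) (norm_nonneg _) ?_ ?_
    · rw [hΩp, norm_neg]
      exact norm_integral_Ici_exp_smul_apply_le _ hγ hexpP hFp t
    · rw [hΩm]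
      exact norm_integral_Iic_exp_smul_apply_le _ hγ hexpM hFm t

/-- The operator Ω maps the ball S of continuous functions with sup-norm at most
`√2·N·M/γ` into itself. -/
theorem stmt2 (r q : ℕ)
    (Ap : Matrix (Fin r) (Fin r) ℝ) (Am : Matrix (Fin q) (Fin q) ℝ)
    (N γ M : ℝ) (hN : 1 ≤ N) (hγ : 0 < γ) (hM : 0 < M)
    (hexpP : ∀ t : ℝ, t ≤ 0 →
      ‖NormedSpace.exp (t • (Matrix.toEuclideanCLM (𝕜 := ℝ) Ap))‖ ≤ N * Real.exp (γ * t))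
    (hexpM : ∀ t : ℝ, 0 ≤ t →
      ‖NormedSpace.exp (t • (Matrix.toEuclideanCLM (𝕜 := ℝ) Am))‖ ≤ N * Real.exp (-γ * t))
    (Fp : ℝ → EuclideanSpace ℝ (Fin r) × EuclideanSpace ℝ (Fin q) → EuclideanSpace ℝ (Fin r))
    (Fm : ℝ → EuclideanSpace ℝ (Fin r) × EuclideanSpace ℝ (Fin q) → EuclideanSpace ℝ (Fin q))
    (hFc : Continuous (Function.uncurry fun t x => (Fp t x, Fm t x)))
    (hFbound : ∀ t x, Real.sqrt (‖Fp t x‖ ^ 2 + ‖Fm t x‖ ^ 2) ≤ M)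
    (φp : ℝ → EuclideanSpace ℝ (Fin r)) (φm : ℝ → EuclideanSpace ℝ (Fin q))
    (hφc : Continuous φp ∧ Continuous φm)
    (hφS : ∀ t, Real.sqrt (‖φp t‖ ^ 2 + ‖φm t‖ ^ 2) ≤ Real.sqrt 2 * N * M / γ)
    (Ωp : ℝ → EuclideanSpace ℝ (Fin r)) (Ωm : ℝ → EuclideanSpace ℝ (Fin q))
    (hΩp : ∀ t, Ωp t = - ∫ s in Set.Ici t,
      NormedSpace.exp ((t - s) • (Matrix.toEuclideanCLM (𝕜 := ℝ) Ap)) (Fp s (φp s, φm s)))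
    (hΩm : ∀ t, Ωm t = ∫ s in Set.Iic t,
      NormedSpace.exp ((t - s) • (Matrix.toEuclideanCLM (𝕜 := ℝ) Am)) (Fm s (φp s, φm s))) :
    (Continuous Ωp ∧ Continuous Ωm) ∧
      ∀ t, Real.sqrt (‖Ωp t‖ ^ 2 + ‖Ωm t‖ ^ 2) ≤ Real.sqrt 2 * N * M / γ :=
  stmt2_general r q Ap Am N γ M hγ hexpP hexpM Fp Fm hFc hFbound φp φm hφc Ωp Ωm hΩp hΩm
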